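/- arXiv:math/0509327 — 8 statements merged into one kernel-verified Lean document; each statement's English description precedes it below -/
import Mathlib

section
/- Let H be a Hilbert space and M, N closed subspaces. The Friedrichs angle satisfies c(M, N) = c(M⊥, N⊥), where c(M,N) = sup{|⟨x,y⟩| : x ∈ M ⊖ (M∩N), y ∈ N ⊖ (M∩N), ‖x‖=‖y‖=1}. -/
open ContinuousLinearMap Submodule

noncomputable def friedrichsAngle {H : Type*} [NormedAddCommGroup H] [InnerProductSpace ℂ H]
    (M N : Submodule ℂ H) : ℝ :=
  sSup {r : ℝ | ∃ x ∈ M ⊓ (M ⊓ N)ᗮ, ∃ y ∈ N ⊓ (M ⊓ N)ᗮ,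
    ‖x‖ = 1 ∧ ‖y‖ = 1 ∧ r = ‖(inner ℂ x y : ℂ)‖}

variable {H : Type*} [NormedAddCommGroup H] [InnerProductSpace ℂ H] [CompleteSpace H]

/-!
By `Mᗮᗮ = M` it suffices to prove `c(M, N) ≤ c' := c(Mᗮ, Nᗮ)`, and only the case `c' < 1` needs
work: there it amounts to `‖P_N z‖ ≤ c' ‖z‖` for `z ∈ M ⊖ (M ∩ N)`. For `z ∈ M`, the vectors
`P_N z - P_M P_N z ∈ Mᗮ` and `P_N z - z ∈ Nᗮ` are orthogonal to `Mᗮ ∩ Nᗮ` and their inner product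
is `‖P_N z - P_M P_N z‖²`, so each step of the alternating projections `z, P_N z, P_M P_N z, …` is
at most `c'` times the previous one. The iterates therefore converge, and their limit lies in
`M ∩ N` and is orthogonal to it, so it is `0`. Summing the Pythagorean identities
`‖w k‖² = ‖w (k + 1)‖² + ‖w k - w (k + 1)‖²` then gives `(1 - c'²) ‖z‖² ≤ ‖z - P_N z‖²`.
-/

open Filter Topology

theorem one_sub_sq_mul_norm_sq_le_of_tendsto_zero {E : Type*} [NormedAddCommGroup E]
    {w : ℕ → E} {r : ℝ} (hr0 : 0 ≤ r) (hr1 : r < 1) (hw : Tendsto w atTop (𝓝 0))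
    (hpyth : ∀ k, ‖w k‖ ^ 2 = ‖w (k + 1)‖ ^ 2 + ‖w k - w (k + 1)‖ ^ 2)
    (hdecay : ∀ k, ‖w k - w (k + 1)‖ ≤ ‖w 0 - w 1‖ * r ^ k) :
    (1 - r ^ 2) * ‖w 0‖ ^ 2 ≤ ‖w 0 - w 1‖ ^ 2 := by
  have hr2 : r ^ 2 < 1 := pow_lt_one₀ hr0 hr1 two_ne_zero
  have hpartial : ∀ K, ‖w 0‖ ^ 2 - ‖w K‖ ^ 2 ≤ ‖w 0 - w 1‖ ^ 2 / (1 - r ^ 2) := fun K =>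
    calc ‖w 0‖ ^ 2 - ‖w K‖ ^ 2 = ∑ k ∈ Finset.range K, ‖w k - w (k + 1)‖ ^ 2 := by
          rw [← Finset.sum_range_sub' (fun k => ‖w k‖ ^ 2)]
          exact Finset.sum_congr rfl fun k _ => by rw [hpyth k]; ring
      _ ≤ ∑ k ∈ Finset.range K, ‖w 0 - w 1‖ ^ 2 * (r ^ 2) ^ k :=
          Finset.sum_le_sum fun k _ => by
            rw [show ‖w 0 - w 1‖ ^ 2 * (r ^ 2) ^ k = (‖w 0 - w 1‖ * r ^ k) ^ 2 by ring]
            exact pow_le_pow_left₀ (norm_nonneg _) (hdecay k) 2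
      _ ≤ ‖w 0 - w 1‖ ^ 2 / (1 - r ^ 2) := by
          rw [← Finset.mul_sum, div_eq_mul_one_div]
          gcongr
          simpa using geom_sum_Ico_le_of_lt_one (m := 0) (n := K) (sq_nonneg r) hr2
  have hlim : Tendsto (fun K => ‖w 0‖ ^ 2 - ‖w K‖ ^ 2) atTop (𝓝 (‖w 0‖ ^ 2)) := by
    simpa using tendsto_const_nhds.sub (hw.norm.pow 2)
  have hbound := le_of_tendsto' hlim hpartial
  rwa [le_div_iff₀ (sub_pos.2 hr2), mul_comm] at hbound

namespace Submodule

variable {𝕜 E : Type*} [RCLike 𝕜] [NormedAddCommGroup E] [InnerProductSpace 𝕜 E]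

theorem starProjection_mem_orthogonal_of_le {K V : Submodule 𝕜 E} [V.HasOrthogonalProjection]
    (hKV : K ≤ V) {z : E} (hz : z ∈ Kᗮ) : V.starProjection z ∈ Kᗮ := by
  intro t ht
  rw [← inner_starProjection_left_eq_right, starProjection_eq_self_iff.2 (hKV ht)]
  exact hz t ht

theorem norm_sq_eq_norm_sq_starProjection_add_norm_sq_sub (V : Submodule 𝕜 E)
    [V.HasOrthogonalProjection] (z : E) :
    ‖z‖ ^ 2 = ‖V.starProjection z‖ ^ 2 + ‖z - V.starProjection z‖ ^ 2 := by
  rw [norm_sq_eq_add_norm_sq_starProjection z V, starProjection_orthogonal_val]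

/-- The `k`-th term of `z, P_V z, P_U P_V z, P_V P_U P_V z, …`. -/
noncomputable def alternatingProjection (U V : Submodule 𝕜 E) [U.HasOrthogonalProjection]
    [V.HasOrthogonalProjection] : ℕ → E → E
  | 0, z => z
  | k + 1, z => alternatingProjection V U k (V.starProjection z)

variable (U V : Submodule 𝕜 E) [U.HasOrthogonalProjection] [V.HasOrthogonalProjection]

theorem alternatingProjection_succ (k : ℕ) (z : E) :
    alternatingProjection U V (k + 1) z = alternatingProjection V U k (V.starProjection z) := rfl

theorem alternatingProjection_two_mul_mem {z : E} (hz : z ∈ U) (k : ℕ) :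
    alternatingProjection U V (2 * k) z ∈ U := by
  induction k generalizing z with
  | zero => exact hz
  | succ k ih => exact ih (U.starProjection_apply_mem _)

theorem alternatingProjection_two_mul_add_one_mem (z : E) (k : ℕ) :
    alternatingProjection U V (2 * k + 1) z ∈ V :=
  alternatingProjection_two_mul_mem V U (V.starProjection_apply_mem z) k

theorem alternatingProjection_mem_orthogonal_inf {z : E} (hz : z ∈ (U ⊓ V)ᗮ) (k : ℕ) :
    alternatingProjection U V k z ∈ (U ⊓ V)ᗮ := by
  induction k generalizing U V z with
  | zero => exact hz
  | succ k ih =>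
    rw [alternatingProjection_succ, inf_comm]
    exact ih V U (starProjection_mem_orthogonal_of_le inf_le_left (inf_comm U V ▸ hz))

theorem norm_sq_alternatingProjection (k : ℕ) (z : E) :
    ‖alternatingProjection U V k z‖ ^ 2 = ‖alternatingProjection U V (k + 1) z‖ ^ 2 +
      ‖alternatingProjection U V k z - alternatingProjection U V (k + 1) z‖ ^ 2 := by
  induction k generalizing U V z with
  | zero => exact norm_sq_eq_norm_sq_starProjection_add_norm_sq_sub V z
  | succ k ih => exact ih V U _

end Submodule

section FriedrichsAngle

variable {E : Type*} [NormedAddCommGroup E] [InnerProductSpace ℂ E]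

theorem friedrichsAngle_comm (M N : Submodule ℂ E) :
    friedrichsAngle M N = friedrichsAngle N M := by
  unfold friedrichsAngle
  congr 1
  ext r
  constructor <;>
  · rintro ⟨x, hx, y, hy, hx1, hy1, rfl⟩
    exact ⟨y, inf_comm M N ▸ hy, x, inf_comm M N ▸ hx, hy1, hx1, norm_inner_symm x y⟩

theorem friedrichsAngle_nonneg (M N : Submodule ℂ E) : 0 ≤ friedrichsAngle M N :=
  Real.sSup_nonneg fun _ ⟨_, _, _, _, _, _, hr⟩ => hr ▸ norm_nonneg _

theorem friedrichsAngle_le_one (M N : Submodule ℂ E) : friedrichsAngle M N ≤ 1 := by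
  refine Real.sSup_le ?_ zero_le_one
  rintro r ⟨x, -, y, -, hx1, hy1, rfl⟩
  simpa [hx1, hy1] using norm_inner_le_norm (𝕜 := ℂ) x y

theorem norm_inner_le_friedrichsAngle_mul {M N : Submodule ℂ E} {x y : E}
    (hx : x ∈ M ⊓ (M ⊓ N)ᗮ) (hy : y ∈ N ⊓ (M ⊓ N)ᗮ) :
    ‖(inner ℂ x y : ℂ)‖ ≤ friedrichsAngle M N * (‖x‖ * ‖y‖) := by
  rcases eq_or_ne x 0 with rfl | hx0
  · simp
  rcases eq_or_ne y 0 with rfl | hy0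
  · simp
  have hle : ‖(inner ℂ x y : ℂ)‖ / (‖x‖ * ‖y‖) ≤ friedrichsAngle M N := by
    refine le_csSup ⟨1, ?_⟩ ⟨(‖x‖⁻¹ : ℂ) • x, smul_mem _ _ hx, (‖y‖⁻¹ : ℂ) • y, smul_mem _ _ hy,
      by simp [norm_smul, hx0], by simp [norm_smul, hy0], by simp [div_eq_mul_inv]; ring⟩
    rintro r ⟨x, -, y, -, hx1, hy1, rfl⟩
    simpa [hx1, hy1] using norm_inner_le_norm (𝕜 := ℂ) x y
  rwa [div_le_iff₀ (by positivity)] at hle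

theorem norm_sub_starProjection_le_friedrichsAngle_mul (U V : Submodule ℂ E)
    [U.HasOrthogonalProjection] [V.HasOrthogonalProjection] {z : E} (hz : z ∈ U) :
    ‖V.starProjection z - U.starProjection (V.starProjection z)‖ ≤
      friedrichsAngle Uᗮ Vᗮ * ‖z - V.starProjection z‖ := by
  set y := V.starProjection z
  set b := y - U.starProjection y
  have hsup : U ⊔ V ≤ (Uᗮ ⊓ Vᗮ)ᗮ := inf_orthogonal U V ▸ le_orthogonal_orthogonal _
  have hb : b ∈ Uᗮ ⊓ (Uᗮ ⊓ Vᗮ)ᗮ := ⟨sub_starProjection_mem_orthogonal y,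
    hsup (sub_mem (mem_sup_right (starProjection_apply_mem V z))
      (mem_sup_left (starProjection_apply_mem U y)))⟩
  have ha : y - z ∈ Vᗮ ⊓ (Uᗮ ⊓ Vᗮ)ᗮ := ⟨neg_sub z y ▸ neg_mem (sub_starProjection_mem_orthogonal z),
    hsup (sub_mem (mem_sup_right (starProjection_apply_mem V z)) (mem_sup_left hz))⟩
  have hinner : (inner ℂ b (y - z) : ℂ) = inner ℂ b b := by
    have hU : U.starProjection y - z ∈ U := sub_mem (starProjection_apply_mem U y) hz
    rw [← sub_add_sub_cancel y (U.starProjection y) z, inner_add_right,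
      inner_left_of_mem_orthogonal hU hb.1, add_zero]
  have key : ‖b‖ * ‖b‖ ≤ friedrichsAngle Uᗮ Vᗮ * ‖z - y‖ * ‖b‖ := by
    have := norm_inner_le_friedrichsAngle_mul hb ha
    rw [hinner, ← inner_self_re_eq_norm, inner_self_eq_norm_mul_norm, norm_sub_rev y z] at this
    linarith
  rcases (norm_nonneg b).eq_or_lt with hb0 | hb0
  · rw [← hb0]
    exact mul_nonneg (friedrichsAngle_nonneg _ _) (norm_nonneg _)
  · exact le_of_mul_le_mul_right key hb0

end FriedrichsAngle

namespace Submodule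

variable {E : Type*} [NormedAddCommGroup E] [InnerProductSpace ℂ E]
variable (U V : Submodule ℂ E) [U.HasOrthogonalProjection] [V.HasOrthogonalProjection]

theorem norm_alternatingProjection_sub_succ_le {z : E} (hz : z ∈ U) (k : ℕ) :
    ‖alternatingProjection U V (k + 1) z - alternatingProjection U V (k + 2) z‖ ≤
      friedrichsAngle Uᗮ Vᗮ *
        ‖alternatingProjection U V k z - alternatingProjection U V (k + 1) z‖ := by
  induction k generalizing U V z with
  | zero => exact norm_sub_starProjection_le_friedrichsAngle_mul U V hz
  | succ k ih =>
    rw [friedrichsAngle_comm]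
    exact ih V U (starProjection_apply_mem V z)

theorem norm_alternatingProjection_sub_succ_le_pow {z : E} (hz : z ∈ U) (k : ℕ) :
    ‖alternatingProjection U V k z - alternatingProjection U V (k + 1) z‖ ≤
      ‖z - V.starProjection z‖ * friedrichsAngle Uᗮ Vᗮ ^ k := by
  induction k with
  | zero => simp [alternatingProjection]
  | succ k ih =>
    calc _ ≤ friedrichsAngle Uᗮ Vᗮ *
          ‖alternatingProjection U V k z - alternatingProjection U V (k + 1) z‖ :=
          norm_alternatingProjection_sub_succ_le U V hz k
      _ ≤ friedrichsAngle Uᗮ Vᗮ * (‖z - V.starProjection z‖ * friedrichsAngle Uᗮ Vᗮ ^ k) :=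
          mul_le_mul_of_nonneg_left ih (friedrichsAngle_nonneg _ _)
      _ = ‖z - V.starProjection z‖ * friedrichsAngle Uᗮ Vᗮ ^ (k + 1) := by ring

theorem tendsto_alternatingProjection_zero [CompleteSpace E] (hc : friedrichsAngle Uᗮ Vᗮ < 1)
    {z : E} (hz : z ∈ U ⊓ (U ⊓ V)ᗮ) :
    Tendsto (fun k => alternatingProjection U V k z) atTop (𝓝 0) := by
  obtain ⟨v, hv⟩ := cauchySeq_tendsto_of_complete <|
    cauchySeq_of_le_geometric (f := (alternatingProjection U V · z)) _ _ hc fun k => by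
      simpa only [dist_eq_norm] using norm_alternatingProjection_sub_succ_le_pow U V hz.1 k
  have h2k : Tendsto (fun k : ℕ => 2 * k) atTop atTop :=
    tendsto_atTop_mono (fun k => show k ≤ _ by omega) tendsto_id
  have h2k1 : Tendsto (fun k : ℕ => 2 * k + 1) atTop atTop :=
    tendsto_atTop_mono (fun k => show k ≤ _ by omega) tendsto_id
  have hvU : v ∈ U := (orthogonal_orthogonal U ▸ isClosed_orthogonal Uᗮ).mem_of_tendsto
    (hv.comp h2k) (.of_forall (alternatingProjection_two_mul_mem U V hz.1))
  have hvV : v ∈ V := (orthogonal_orthogonal V ▸ isClosed_orthogonal Vᗮ).mem_of_tendsto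
    (hv.comp h2k1) (.of_forall (alternatingProjection_two_mul_add_one_mem U V z))
  have hvK : v ∈ (U ⊓ V)ᗮ := (isClosed_orthogonal _).mem_of_tendsto hv
    (.of_forall (alternatingProjection_mem_orthogonal_inf U V hz.2))
  have hv0 : v ∈ (U ⊓ V) ⊓ (U ⊓ V)ᗮ := ⟨⟨hvU, hvV⟩, hvK⟩
  rw [inf_orthogonal_eq_bot, mem_bot] at hv0
  rwa [hv0] at hv

theorem norm_starProjection_le_friedrichsAngle_orthogonal_mul [CompleteSpace E]
    (hc : friedrichsAngle Uᗮ Vᗮ < 1) {z : E} (hz : z ∈ U ⊓ (U ⊓ V)ᗮ) :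
    ‖V.starProjection z‖ ≤ friedrichsAngle Uᗮ Vᗮ * ‖z‖ := by
  have hc0 := friedrichsAngle_nonneg Uᗮ Vᗮ
  have hbound := one_sub_sq_mul_norm_sq_le_of_tendsto_zero hc0 hc
    (tendsto_alternatingProjection_zero U V hc hz) (norm_sq_alternatingProjection U V · z)
    (norm_alternatingProjection_sub_succ_le_pow U V hz.1)
  have hpyth := norm_sq_eq_norm_sq_starProjection_add_norm_sq_sub V z
  simp only [alternatingProjection] at hbound
  exact pow_le_pow_iff_left₀ (norm_nonneg _) (by positivity) two_ne_zero |>.1 (by linarith)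

end Submodule

theorem friedrichsAngle_le_friedrichsAngle_orthogonal {E : Type*} [NormedAddCommGroup E]
    [InnerProductSpace ℂ E] [CompleteSpace E] (M N : Submodule ℂ E)
    [M.HasOrthogonalProjection] [N.HasOrthogonalProjection] :
    friedrichsAngle M N ≤ friedrichsAngle Mᗮ Nᗮ := by
  rcases le_or_gt 1 (friedrichsAngle Mᗮ Nᗮ) with h1 | h1
  · exact (friedrichsAngle_le_one M N).trans h1
  refine Real.sSup_le ?_ (friedrichsAngle_nonneg _ _)
  rintro r ⟨x, hx, y, hy, hx1, hy1, rfl⟩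
  calc ‖(inner ℂ x y : ℂ)‖ = ‖(inner ℂ (N.starProjection x) y : ℂ)‖ := by
        rw [inner_starProjection_left_eq_right, starProjection_eq_self_iff.2 hy.1]
    _ ≤ ‖N.starProjection x‖ * ‖y‖ := norm_inner_le_norm _ _
    _ ≤ friedrichsAngle Mᗮ Nᗮ := by
        simpa [hx1, hy1] using norm_starProjection_le_friedrichsAngle_orthogonal_mul M N h1 hx

theorem friedrichsAngle_orthogonal (M N : Submodule ℂ H)
    (hM : IsClosed (M : Set H)) (hN : IsClosed (N : Set H)) :
    friedrichsAngle M N = friedrichsAngle Mᗮ Nᗮ := by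
  have : CompleteSpace M := hM.completeSpace_coe
  have : CompleteSpace N := hN.completeSpace_coe
  refine le_antisymm (friedrichsAngle_le_friedrichsAngle_orthogonal M N) ?_
  simpa only [orthogonal_orthogonal] using friedrichsAngle_le_friedrichsAngle_orthogonal Mᗮ Nᗮ
end

section
/- Let H be a Hilbert space and M, N closed subspaces. The Friedrichs angle cosine c(M, N) < 1 if and only if M + N is a closed subspace of H. -/
open ContinuousLinearMap Submodule

variable {H : Type*} [NormedAddCommGroup H] [InnerProductSpace ℂ H] [CompleteSpace H]

/-!
Put `L = M ⊓ N`, `A = M ⊖ L` and `B = N ⊖ L`; then `c(M, N)` is the Dixmier cosine `c₀(A, B)`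
and `A ⊓ B = 0`. Comparing `‖a + b‖² = ‖a‖² + 2 Re ⟪a, b⟫ + ‖b‖²` with `|⟪a, b⟫| ≤ c₀ ‖a‖ ‖b‖`
shows that `c₀(A, B) < 1` iff `‖a‖ ≤ C ‖a + b‖` on `A × B` for some `C`, i.e. iff the addition map
`A × B → H` is antilipschitz; by the open mapping theorem this is equivalent to its range `A + B`
being closed. Finally `M + N` is the orthogonal sum of `L` and `A + B`, so it is closed iff
`A + B` is.
-/

open scoped InnerProductSpace
open RCLike ComplexConjugate

namespace Submodule

section Banach

variable {𝕜 E : Type*} [NontriviallyNormedField 𝕜] [NormedAddCommGroup E] [NormedSpace 𝕜 E]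
  {A B : Submodule 𝕜 E} {C : ℝ}

noncomputable def addL (A B : Submodule 𝕜 E) : A × B →L[𝕜] E := A.subtypeL.coprod B.subtypeL

@[simp]
theorem addL_apply (p : A × B) : A.addL B p = p.1 + p.2 := rfl

theorem range_addL : Set.range (A.addL B) = A ⊔ B := by
  ext z
  simp [Submodule.mem_sup, eq_comm]

theorem injective_addL (h : Disjoint A B) : Function.Injective (A.addL B) := by
  have := LinearMap.ker_coprod_of_disjoint_range A.subtype B.subtype (by simpa using h)
  exact LinearMap.ker_eq_bot.mp (by simpa [addL] using this)

theorem disjoint_of_norm_le_mul_norm_add (h : ∀ a ∈ A, ∀ b ∈ B, ‖a‖ ≤ C * ‖a + b‖) :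
    Disjoint A B :=
  Submodule.disjoint_def.2 fun x hxA hxB => by simpa using h x hxA (-x) (B.neg_mem hxB)

theorem isClosed_sup_of_norm_le_mul_norm_add [CompleteSpace E] (hA : IsClosed (A : Set E))
    (hB : IsClosed (B : Set E)) (h : ∀ a ∈ A, ∀ b ∈ B, ‖a‖ ≤ C * ‖a + b‖) :
    IsClosed ((A ⊔ B : Submodule 𝕜 E) : Set E) := by
  have : CompleteSpace A := hA.completeSpace_coe
  have : CompleteSpace B := hB.completeSpace_coe
  rw [← range_addL, (A.addL B).isClosed_range_iff_antilipschitz_of_injective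
    (injective_addL (disjoint_of_norm_le_mul_norm_add h))]
  set C' := max C 0
  have ha : ∀ a ∈ A, ∀ b ∈ B, ‖a‖ ≤ C' * ‖a + b‖ := fun a ha b hb =>
    (h a ha b hb).trans (by gcongr; exact le_max_left _ _)
  refine ⟨⟨C' + 1, by positivity⟩, (A.addL B).antilipschitz_of_bound
    fun ⟨⟨a, ha'⟩, ⟨b, hb'⟩⟩ => max_le ?_ ?_⟩
  · show ‖a‖ ≤ (C' + 1) * ‖a + b‖
    nlinarith [ha a ha' b hb', norm_nonneg (a + b)]
  · calc ‖b‖ = ‖(a + b) - a‖ := by rw [add_sub_cancel_left]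
      _ ≤ ‖a + b‖ + ‖a‖ := norm_sub_le _ _
      _ ≤ (C' + 1) * ‖a + b‖ := by linarith [ha a ha' b hb']

theorem exists_norm_le_mul_norm_add_of_isClosed_sup [CompleteSpace E] (hA : IsClosed (A : Set E))
    (hB : IsClosed (B : Set E)) (hAB : Disjoint A B)
    (h : IsClosed ((A ⊔ B : Submodule 𝕜 E) : Set E)) :
    ∃ C, ∀ a ∈ A, ∀ b ∈ B, ‖a‖ ≤ C * ‖a + b‖ := by
  have : CompleteSpace A := hA.completeSpace_coe
  have : CompleteSpace B := hB.completeSpace_coe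
  obtain ⟨K, hK⟩ := (A.addL B).antilipschitz_of_injective_of_isClosed_range (injective_addL hAB)
    (by rwa [range_addL])
  refine ⟨K, fun a ha b hb => ?_⟩
  calc ‖a‖ ≤ ‖((⟨a, ha⟩, ⟨b, hb⟩) : A × B)‖ := norm_fst_le ((⟨a, ha⟩, ⟨b, hb⟩) : A × B)
    _ ≤ K * ‖a + b‖ := hK.le_mul_norm (map_zero _) _

theorem exists_norm_le_mul_norm_add_iff [CompleteSpace E] (hA : IsClosed (A : Set E))
    (hB : IsClosed (B : Set E)) :
    (∃ C, ∀ a ∈ A, ∀ b ∈ B, ‖a‖ ≤ C * ‖a + b‖) ↔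
      Disjoint A B ∧ IsClosed ((A ⊔ B : Submodule 𝕜 E) : Set E) :=
  ⟨fun ⟨_, h⟩ => ⟨disjoint_of_norm_le_mul_norm_add h, isClosed_sup_of_norm_le_mul_norm_add hA hB h⟩,
    fun ⟨hAB, h⟩ => exists_norm_le_mul_norm_add_of_isClosed_sup hA hB hAB h⟩

end Banach

end Submodule

section InnerProduct

variable {𝕜 E : Type*} [RCLike 𝕜] [NormedAddCommGroup E] [InnerProductSpace 𝕜 E]

/-- Cosine of the Dixmier (minimal) angle between `A` and `B`. -/
noncomputable def dixmierAngle (A B : Submodule 𝕜 E) : ℝ :=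
  sSup {r : ℝ | ∃ x ∈ A, ∃ y ∈ B, ‖x‖ = 1 ∧ ‖y‖ = 1 ∧ r = ‖⟪x, y⟫_𝕜‖}

theorem friedrichsAngle_eq_dixmierAngle {F : Type*} [NormedAddCommGroup F]
    [InnerProductSpace ℂ F] (M N : Submodule ℂ F) :
    friedrichsAngle M N = dixmierAngle (M ⊓ (M ⊓ N)ᗮ) (N ⊓ (M ⊓ N)ᗮ) := rfl

variable {A B : Submodule 𝕜 E}

theorem dixmierAngle_nonneg : 0 ≤ dixmierAngle A B :=
  Real.sSup_nonneg fun _ ⟨_, _, _, _, _, _, hr⟩ => hr ▸ norm_nonneg _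

theorem dixmierAngle_le {c : ℝ} (hc : 0 ≤ c)
    (h : ∀ x ∈ A, ∀ y ∈ B, ‖x‖ = 1 → ‖y‖ = 1 → ‖⟪x, y⟫_𝕜‖ ≤ c) : dixmierAngle A B ≤ c :=
  Real.sSup_le (fun _ ⟨x, hx, y, hy, hx1, hy1, hr⟩ => hr ▸ h x hx y hy hx1 hy1) hc

theorem norm_inner_le_dixmierAngle_mul {a b : E} (ha : a ∈ A) (hb : b ∈ B) :
    ‖⟪a, b⟫_𝕜‖ ≤ dixmierAngle A B * (‖a‖ * ‖b‖) := by
  rcases eq_or_ne a 0 with rfl | ha0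
  · simp
  rcases eq_or_ne b 0 with rfl | hb0
  · simp
  have hbdd : BddAbove {r : ℝ | ∃ x ∈ A, ∃ y ∈ B, ‖x‖ = 1 ∧ ‖y‖ = 1 ∧ r = ‖⟪x, y⟫_𝕜‖} :=
    ⟨1, fun _ ⟨x, _, y, _, hx1, hy1, hr⟩ =>
      hr ▸ (norm_inner_le_norm x y).trans (by simp [hx1, hy1])⟩
  have hle := le_csSup hbdd ⟨_, A.smul_mem (‖a‖⁻¹ : 𝕜) ha, _, B.smul_mem (‖b‖⁻¹ : 𝕜) hb,
    norm_smul_inv_norm ha0, norm_smul_inv_norm hb0, rfl⟩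
  have hpos : 0 < ‖a‖ * ‖b‖ := by positivity
  simp only [inner_smul_left, inner_smul_right, norm_mul, norm_conj, norm_inv, norm_ofReal,
    abs_norm] at hle
  rw [← div_le_iff₀ hpos]
  calc ‖⟪a, b⟫_𝕜‖ / (‖a‖ * ‖b‖) = ‖b‖⁻¹ * (‖a‖⁻¹ * ‖⟪a, b⟫_𝕜‖) := by field_simp
    _ ≤ _ := hle

theorem one_sub_mul_sq_norm_le_sq_norm_add {a b : E} {c : ℝ} (hc0 : 0 ≤ c) (hc1 : c ≤ 1)
    (h : ‖⟪a, b⟫_𝕜‖ ≤ c * (‖a‖ * ‖b‖)) : (1 - c) * ‖a‖ ^ 2 ≤ ‖a + b‖ ^ 2 := by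
  have hre : -(c * (‖a‖ * ‖b‖)) ≤ re ⟪a, b⟫_𝕜 :=
    neg_le_of_abs_le ((abs_re_le_norm _).trans h)
  rw [norm_add_sq (𝕜 := 𝕜)]
  nlinarith [mul_nonneg hc0 (sq_nonneg (‖a‖ - ‖b‖)),
    mul_nonneg (sub_nonneg.mpr hc1) (sq_nonneg ‖b‖)]

theorem dixmierAngle_le_sqrt {C : ℝ} (h : ∀ a ∈ A, ∀ b ∈ B, ‖a‖ ≤ C * ‖a + b‖) :
    dixmierAngle A B ≤ √(1 - (C ^ 2)⁻¹) := by
  refine dixmierAngle_le (Real.sqrt_nonneg _) fun x hx y hy hx1 hy1 => ?_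
  set t := ⟪x, y⟫_𝕜
  -- `⟪x, conj t • y⟫ = ‖t‖ ^ 2`, so testing the bound on `b = -(conj t • y)` controls `‖t‖`
  have hnorm : ‖x - conj t • y‖ ^ 2 = 1 - ‖t‖ ^ 2 := by
    rw [norm_sub_sq (𝕜 := 𝕜), inner_smul_right, RCLike.conj_mul, norm_smul, norm_conj, hx1, hy1]
    simp only [← ofReal_pow, ofReal_re]
    ring
  have hkey : 1 ≤ C ^ 2 * (1 - ‖t‖ ^ 2) := by
    have := h x hx _ (B.neg_mem (B.smul_mem (conj t) hy))
    rw [← sub_eq_add_neg, hx1] at this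
    rw [← hnorm, ← mul_pow]
    exact one_le_pow₀ this
  have hC : 0 < C ^ 2 := by nlinarith [sq_nonneg C, sq_nonneg ‖t‖]
  refine Real.le_sqrt_of_sq_le ?_
  linarith [(inv_le_iff_one_le_mul₀' hC).2 hkey]

theorem dixmierAngle_lt_one_iff :
    dixmierAngle A B < 1 ↔ ∃ C, ∀ a ∈ A, ∀ b ∈ B, ‖a‖ ≤ C * ‖a + b‖ := by
  constructor
  · intro hc
    set c := dixmierAngle A B
    refine ⟨(√(1 - c))⁻¹, fun a ha b hb => ?_⟩
    have hsq := one_sub_mul_sq_norm_le_sq_norm_add dixmierAngle_nonneg hc.le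
      (norm_inner_le_dixmierAngle_mul ha hb)
    have hpos : 0 < √(1 - c) := Real.sqrt_pos.2 (by linarith)
    rw [inv_mul_eq_div, le_div_iff₀ hpos]
    refine (pow_le_pow_iff_left₀ (by positivity) (norm_nonneg _) two_ne_zero).1 ?_
    rw [mul_pow, Real.sq_sqrt (by linarith)]
    linarith
  · rintro ⟨C, hC⟩
    have hC' : ∀ a ∈ A, ∀ b ∈ B, ‖a‖ ≤ max C 1 * ‖a + b‖ := fun a ha b hb =>
      (hC a ha b hb).trans (by gcongr; exact le_max_left _ _)
    calc dixmierAngle A B ≤ √(1 - (max C 1 ^ 2)⁻¹) := dixmierAngle_le_sqrt hC'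
      _ < 1 := by
        rw [Real.sqrt_lt' one_pos]
        have : 0 < max C 1 := lt_max_of_lt_right one_pos
        simp only [one_pow, sub_lt_self_iff, inv_pos]
        positivity

end InnerProduct

section Orthogonal

variable {𝕜 E : Type*} [RCLike 𝕜] [NormedAddCommGroup E] [InnerProductSpace 𝕜 E]

theorem Submodule.IsOrtho.isClosed_sup [CompleteSpace E] {U V : Submodule 𝕜 E}
    (hU : IsClosed (U : Set E)) (hV : IsClosed (V : Set E)) (hUV : U ⟂ V) :
    IsClosed ((U ⊔ V : Submodule 𝕜 E) : Set E) :=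
  isClosed_sup_of_norm_le_mul_norm_add (C := 1) hU hV fun u hu v hv => by
    rw [one_mul, mul_self_le_mul_self_iff (norm_nonneg _) (norm_nonneg _),
      norm_add_sq_eq_norm_sq_add_norm_sq_of_inner_eq_zero (𝕜 := 𝕜) u v (hUV.inner_eq hu hv)]
    nlinarith [norm_nonneg v]

theorem disjoint_inf_orthogonal_inf (M N : Submodule 𝕜 E) :
    Disjoint (M ⊓ (M ⊓ N)ᗮ) (N ⊓ (M ⊓ N)ᗮ) :=
  disjoint_iff_inf_le.2 <| ((M ⊓ N).inf_orthogonal_eq_bot ▸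
    le_inf (inf_le_inf inf_le_left inf_le_left) (inf_le_left.trans inf_le_right))

variable (M N : Submodule 𝕜 E) [(M ⊓ N).HasOrthogonalProjection]

theorem sup_eq_inf_sup_sup_inf_orthogonal :
    M ⊔ N = M ⊓ N ⊔ (M ⊓ (M ⊓ N)ᗮ ⊔ N ⊓ (M ⊓ N)ᗮ) := by
  have hM := sup_orthogonal_inf_of_hasOrthogonalProjection (inf_le_left : M ⊓ N ≤ M)
  have hN := sup_orthogonal_inf_of_hasOrthogonalProjection (inf_le_right : M ⊓ N ≤ N)
  rw [inf_comm (M ⊓ N)ᗮ M] at hM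
  rw [inf_comm (M ⊓ N)ᗮ N] at hN
  calc M ⊔ N = (M ⊓ N ⊔ M ⊓ (M ⊓ N)ᗮ) ⊔ (M ⊓ N ⊔ N ⊓ (M ⊓ N)ᗮ) := by rw [hM, hN]
    _ = _ := by rw [sup_sup_sup_comm, sup_idem]

theorem sup_inf_orthogonal_eq :
    M ⊓ (M ⊓ N)ᗮ ⊔ N ⊓ (M ⊓ N)ᗮ = (M ⊔ N) ⊓ (M ⊓ N)ᗮ := by
  rw [sup_eq_inf_sup_sup_inf_orthogonal M N, sup_comm (M ⊓ N),
    sup_inf_assoc_of_le _ (sup_le inf_le_right inf_le_right), inf_orthogonal_eq_bot, sup_bot_eq]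

end Orthogonal

theorem friedrichsAngle_lt_one_iff_closed (M N : Submodule ℂ H)
    (hM : IsClosed (M : Set H)) (hN : IsClosed (N : Set H)) :
    friedrichsAngle M N < 1 ↔ IsClosed ((M ⊔ N : Submodule ℂ H) : Set H) := by
  have hL : IsClosed ((M ⊓ N : Submodule ℂ H) : Set H) := hM.inter hN
  have : CompleteSpace (M ⊓ N : Submodule ℂ H) := hL.completeSpace_coe
  have hLperp := (M ⊓ N).isClosed_orthogonal
  rw [friedrichsAngle_eq_dixmierAngle, dixmierAngle_lt_one_iff,
    exists_norm_le_mul_norm_add_iff (hM.inter hLperp) (hN.inter hLperp),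
    and_iff_right (disjoint_inf_orthogonal_inf M N)]
  constructor
  · intro h
    rw [sup_eq_inf_sup_sup_inf_orthogonal]
    exact IsOrtho.isClosed_sup hL h (isOrtho_iff_le.2 (sup_le inf_le_right inf_le_right)).symm
  · intro h
    rw [sup_inf_orthogonal_eq]
    exact h.inter hLperp
end

section
/- Let A : H1 → H2 and B : H3 → H2 be bounded operators between Hilbert spaces. If R(B) ⊆ R(A) then there exists a unique bounded operator D : H3 → H1 with B = A D and R(D) ⊆ N(A)⊥; moreover N(D) = N(B) and ‖D‖² = inf{λ ∈ ℝ : B B* ≤ λ A A*}. -/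
/-! Restricted to `(ker A)ᗮ`, `A` is injective with the same range, so `B` factors through it,
and the closed graph theorem makes the factor `D` bounded; `D` is unique and `ker D = ker B`
because `ker A ∩ (ker A)ᗮ = 0`.

`B B* ≤ c A A*` means `‖B* y‖² ≤ c ‖A* y‖²` for all `y`. As `B* = D* A*`, `c = ‖D‖²` qualifies.
Conversely, for such `c` the identity `⟪A* y, D x⟫ = ⟪B* y, x⟫` bounds `‖⟪z, D x⟫‖` by
`√c ‖x‖ ‖z‖` on the range of `A*`, hence on its closure `(ker A)ᗮ`, which contains `D x`;
so `‖D x‖ ≤ √c ‖x‖`. -/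

open ContinuousLinearMap Submodule

namespace ContinuousLinearMap

section ClosedGraph

variable {𝕜 E F G : Type*} [NontriviallyNormedField 𝕜]
  [NormedAddCommGroup E] [NormedSpace 𝕜 E] [CompleteSpace E]
  [NormedAddCommGroup F] [NormedSpace 𝕜 F]
  [NormedAddCommGroup G] [NormedSpace 𝕜 G] [CompleteSpace G]

theorem exists_comp_eq_of_injective_of_range_le {T : E →L[𝕜] F} (hT : Function.Injective T)
    {B : G →L[𝕜] F} (h : B.range ≤ T.range) : ∃ D : G →L[𝕜] E, T ∘L D = B := by
  let g : G →ₗ[𝕜] E := (LinearEquiv.ofInjective (T : E →ₗ[𝕜] F) hT).symm.toLinearMap ∘ₗ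
    (B : G →ₗ[𝕜] F).codRestrict T.range fun x => h ⟨x, rfl⟩
  have hTg : ∀ x, T (g x) = B x := fun x => congrArg Subtype.val
    ((LinearEquiv.ofInjective (T : E →ₗ[𝕜] F) hT).apply_symm_apply ⟨B x, h ⟨x, rfl⟩⟩)
  have hgraph : (g.graph : Set (G × E)) = {p | T p.2 = B p.1} := by
    ext ⟨x, y⟩
    simp only [SetLike.mem_coe, LinearMap.mem_graph_iff, Set.mem_ofPred_eq, ← hTg]
    exact ⟨fun hy => hy ▸ rfl, fun hy => hT hy⟩
  refine ⟨ofIsClosedGraph (g := g) ?_, ext hTg⟩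
  rw [hgraph]
  exact isClosed_eq (T.continuous.comp continuous_snd) (B.continuous.comp continuous_fst)

end ClosedGraph

section Hilbert

variable {𝕜 H₁ H₂ H₃ : Type*} [RCLike 𝕜]
  [NormedAddCommGroup H₁] [InnerProductSpace 𝕜 H₁]
  [NormedAddCommGroup H₂] [InnerProductSpace 𝕜 H₂]
  [NormedAddCommGroup H₃] [InnerProductSpace 𝕜 H₃]

theorem eq_zero_of_mem_orthogonal_ker {A : H₁ →L[𝕜] H₂} {v : H₁} (hv : v ∈ A.kerᗮ)
    (hAv : A v = 0) : v = 0 :=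
  (Submodule.mem_bot 𝕜).mp <| A.ker.inf_orthogonal_eq_bot ▸ ⟨hAv, hv⟩

theorem range_comp_subtypeL_orthogonal_ker [CompleteSpace H₁] (A : H₁ →L[𝕜] H₂) :
    (A ∘L A.kerᗮ.subtypeL).range = A.range := by
  have : CompleteSpace A.ker := A.isClosed_ker.completeSpace_coe
  refine le_antisymm (LinearMap.range_comp_le_range _ _) ?_
  rintro _ ⟨w, rfl⟩
  refine ⟨A.kerᗮ.orthogonalProjectionOnto w, ?_⟩
  have hw : w - A.kerᗮ.starProjection w ∈ A.ker := by
    simpa only [Submodule.orthogonal_orthogonal] using A.kerᗮ.sub_starProjection_mem_orthogonal w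
  rw [LinearMap.mem_ker, map_sub, sub_eq_zero] at hw
  exact hw.symm

theorem exists_comp_eq_and_range_le_orthogonal_ker [CompleteSpace H₁] [CompleteSpace H₃]
    {A : H₁ →L[𝕜] H₂} {B : H₃ →L[𝕜] H₂} (h : B.range ≤ A.range) :
    ∃ D : H₃ →L[𝕜] H₁, A ∘L D = B ∧ D.range ≤ A.kerᗮ := by
  have hinj : Function.Injective (A ∘L A.kerᗮ.subtypeL) :=
    (injective_iff_map_eq_zero _).mpr fun v hv => Subtype.ext (eq_zero_of_mem_orthogonal_ker v.2 hv)
  obtain ⟨D₀, hD₀⟩ := exists_comp_eq_of_injective_of_range_le hinj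
    (h.trans (range_comp_subtypeL_orthogonal_ker A).ge)
  refine ⟨A.kerᗮ.subtypeL ∘L D₀, hD₀, ?_⟩
  rintro _ ⟨x, rfl⟩
  exact (D₀ x).2

theorem eq_of_comp_eq_of_range_le_orthogonal_ker {A : H₁ →L[𝕜] H₂} {D D' : H₃ →L[𝕜] H₁}
    (hDD' : A ∘L D = A ∘L D') (hD : D.range ≤ A.kerᗮ) (hD' : D'.range ≤ A.kerᗮ) : D = D' := by
  ext x
  rw [← sub_eq_zero]
  refine eq_zero_of_mem_orthogonal_ker (sub_mem (hD ⟨x, rfl⟩) (hD' ⟨x, rfl⟩)) ?_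
  rw [map_sub, sub_eq_zero]
  exact congr($hDD' x)

theorem ker_comp_eq_of_range_le_orthogonal_ker {A : H₁ →L[𝕜] H₂} {D : H₃ →L[𝕜] H₁}
    (hD : D.range ≤ A.kerᗮ) : (A ∘L D).ker = D.ker := by
  ext x
  exact ⟨eq_zero_of_mem_orthogonal_ker (hD ⟨x, rfl⟩), fun hx => by simp_all⟩

theorem re_inner_comp_adjoint_apply_self [CompleteSpace H₁] [CompleteSpace H₂]
    (T : H₁ →L[𝕜] H₂) (y : H₂) :
    RCLike.re (inner 𝕜 ((T ∘L adjoint T) y) y) = ‖adjoint T y‖ ^ 2 := by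
  simpa using (apply_norm_sq_eq_inner_adjoint_left (adjoint T) y).symm

theorem isPositive_smul_comp_adjoint_sub_iff
    [CompleteSpace H₁] [CompleteSpace H₂] [CompleteSpace H₃]
    (A : H₁ →L[𝕜] H₂) (B : H₃ →L[𝕜] H₂) (c : ℝ) :
    ((c : 𝕜) • (A ∘L adjoint A) - B ∘L adjoint B).IsPositive ↔
      ∀ y, ‖adjoint B y‖ ^ 2 ≤ c * ‖adjoint A y‖ ^ 2 := by
  have hc : IsSelfAdjoint (c : 𝕜) := RCLike.conj_ofReal c
  have hsa : IsSelfAdjoint ((c : 𝕜) • (A ∘L adjoint A) - B ∘L adjoint B) :=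
    (hc.smul (isPositive_self_comp_adjoint A).isSelfAdjoint).sub
      (isPositive_self_comp_adjoint B).isSelfAdjoint
  simp only [isPositive_def', hsa, true_and, reApplyInnerSelf_apply, sub_apply, _root_.smul_apply,
    inner_sub_left, inner_smul_left, RCLike.conj_ofReal, map_sub, RCLike.re_ofReal_mul,
    re_inner_comp_adjoint_apply_self, sub_nonneg]

theorem opNorm_le_of_norm_adjoint_comp_le
    [CompleteSpace H₁] [CompleteSpace H₂] [CompleteSpace H₃]
    {A : H₁ →L[𝕜] H₂} {D : H₃ →L[𝕜] H₁} (hD : D.range ≤ A.kerᗮ) {M : ℝ} (hM : 0 ≤ M)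
    (h : ∀ y, ‖adjoint (A ∘L D) y‖ ≤ M * ‖adjoint A y‖) : ‖D‖ ≤ M := by
  refine D.opNorm_le_bound hM fun x => ?_
  have hDx : D x ∈ closure (Set.range (adjoint A)) := by
    have := hD ⟨x, rfl⟩
    rwa [A.orthogonal_ker, ← SetLike.mem_coe, Submodule.topologicalClosure_coe,
      LinearMap.coe_range, coe_coe] at this
  have hclosed : IsClosed {z : H₁ | ‖inner 𝕜 z (D x)‖ ≤ M * ‖x‖ * ‖z‖} :=
    isClosed_le (by fun_prop) (by fun_prop)
  have hrange : Set.range (adjoint A) ⊆ {z : H₁ | ‖inner 𝕜 z (D x)‖ ≤ M * ‖x‖ * ‖z‖} := by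
    rintro _ ⟨y, rfl⟩
    calc ‖inner 𝕜 (adjoint A y) (D x)‖ = ‖inner 𝕜 (adjoint (A ∘L D) y) x‖ := by
          rw [adjoint_inner_left, adjoint_inner_left, comp_apply]
      _ ≤ ‖adjoint (A ∘L D) y‖ * ‖x‖ := norm_inner_le_norm _ _
      _ ≤ M * ‖adjoint A y‖ * ‖x‖ := by gcongr; exact h y
      _ = M * ‖x‖ * ‖adjoint A y‖ := by ring
  have hsq : ‖D x‖ ^ 2 ≤ M * ‖x‖ * ‖D x‖ := by
    simpa [inner_self_eq_norm_sq_to_K] using closure_minimal hrange hclosed hDx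
  rcases (norm_nonneg (D x)).eq_or_lt with h0 | hpos
  · rw [← h0]
    positivity
  · nlinarith

theorem sq_opNorm_eq_sInf
    [CompleteSpace H₁] [CompleteSpace H₂] [CompleteSpace H₃]
    {A : H₁ →L[𝕜] H₂} {D : H₃ →L[𝕜] H₁} (hD : D.range ≤ A.kerᗮ) :
    ‖D‖ ^ 2 = sInf {c : ℝ |
      ((c : 𝕜) • (A ∘L adjoint A) - (A ∘L D) ∘L adjoint (A ∘L D)).IsPositive} := by
  simp_rw [isPositive_smul_comp_adjoint_sub_iff]
  by_cases hA : A = 0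
  · -- the set is all of `ℝ`, whose `sInf` is the junk value `0`
    subst hA
    have hD0 : D = 0 := by
      ext x
      simpa using hD ⟨x, rfl⟩
    simp [hD0]
  obtain ⟨y₀, hy₀⟩ : ∃ y, adjoint A y ≠ 0 := by
    by_contra! h
    exact hA (by simpa using congrArg adjoint (show adjoint A = 0 from ext h))
  refine (IsLeast.csInf_eq ⟨fun y => ?_, fun c hc => ?_⟩).symm
  · rw [← mul_pow, adjoint_comp, comp_apply, ← LinearIsometryEquiv.norm_map adjoint D]
    gcongr
    exact (adjoint D).le_opNorm _
  have hc0 : 0 ≤ c := by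
    have hpos : 0 < ‖adjoint A y₀‖ ^ 2 := by positivity
    nlinarith [hc y₀, sq_nonneg ‖adjoint (A ∘L D) y₀‖]
  have hDc : ‖D‖ ≤ √c := opNorm_le_of_norm_adjoint_comp_le hD (Real.sqrt_nonneg c) fun y =>
    calc ‖adjoint (A ∘L D) y‖ ≤ √(c * ‖adjoint A y‖ ^ 2) := Real.le_sqrt_of_sq_le (hc y)
      _ = √c * ‖adjoint A y‖ := by rw [Real.sqrt_mul hc0, Real.sqrt_sq (norm_nonneg _)]
  calc ‖D‖ ^ 2 ≤ √c ^ 2 := by gcongr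
    _ = c := Real.sq_sqrt hc0

end Hilbert

end ContinuousLinearMap

theorem douglas_reduced_solution {H₁ H₂ H₃ : Type*}
    [NormedAddCommGroup H₁] [InnerProductSpace ℂ H₁] [CompleteSpace H₁]
    [NormedAddCommGroup H₂] [InnerProductSpace ℂ H₂] [CompleteSpace H₂]
    [NormedAddCommGroup H₃] [InnerProductSpace ℂ H₃] [CompleteSpace H₃]
    (A : H₁ →L[ℂ] H₂) (B : H₃ →L[ℂ] H₂)
    (h : LinearMap.range (B : H₃ →ₗ[ℂ] H₂) ≤ LinearMap.range (A : H₁ →ₗ[ℂ] H₂)) :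
    ∃ D : H₃ →L[ℂ] H₁,
      (B = A ∘L D ∧ LinearMap.range (D : H₃ →ₗ[ℂ] H₁) ≤ (LinearMap.ker (A : H₁ →ₗ[ℂ] H₂))ᗮ) ∧
      (∀ D' : H₃ →L[ℂ] H₁,
        (B = A ∘L D' ∧ LinearMap.range (D' : H₃ →ₗ[ℂ] H₁) ≤ (LinearMap.ker (A : H₁ →ₗ[ℂ] H₂))ᗮ) → D' = D) ∧
      LinearMap.ker (D : H₃ →ₗ[ℂ] H₁) = LinearMap.ker (B : H₃ →ₗ[ℂ] H₂) ∧
      ‖D‖ ^ 2 =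
        sInf {c : ℝ |
          ((c : ℂ) • (A ∘L adjoint A) - B ∘L adjoint B).IsPositive} := by
  obtain ⟨D, rfl, hD⟩ := exists_comp_eq_and_range_le_orthogonal_ker h
  exact ⟨D, ⟨rfl, hD⟩,
    fun D' ⟨hAD', hD'⟩ => eq_of_comp_eq_of_range_le_orthogonal_ker hAD'.symm hD' hD,
    (ker_comp_eq_of_range_le_orthogonal_ker hD).symm, sq_opNorm_eq_sInf hD⟩
end

section
/- Let S ⊆ H1, T ⊆ H2 be closed subspaces and A : H1 → H2 a bounded operator with block matrix (A11 A12; A21 A22) relative to the decompositions H1 = S ⊕ S⊥, H2 = T ⊕ T⊥. Then A is (S,T)-complementable (i.e., there exist projections P̂ on H1 and Q̂ on H2 with R(P̂*) = S, R(Q̂) = T, R(A P̂) ⊆ T, R((Q̂ A)*) ⊆ S) if and only if R(A21) ⊆ R(A22) and R(A12*) ⊆ R(A22*). -/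
open ContinuousLinearMap Submodule

noncomputable def projC {H : Type*} [NormedAddCommGroup H] [InnerProductSpace ℂ H]
    [CompleteSpace H] (S : Submodule ℂ H) [CompleteSpace S] : H →L[ℂ] H :=
  S.subtypeL ∘L orthogonalProjection S

variable {H₁ H₂ : Type*} [NormedAddCommGroup H₁] [InnerProductSpace ℂ H₁] [CompleteSpace H₁]
  [NormedAddCommGroup H₂] [InnerProductSpace ℂ H₂] [CompleteSpace H₂]

noncomputable def blk11 (S : Submodule ℂ H₁) [CompleteSpace S]
    (T : Submodule ℂ H₂) [CompleteSpace T] (A : H₁ →L[ℂ] H₂) : H₁ →L[ℂ] H₂ :=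
  projC T ∘L A ∘L projC S

noncomputable def blk12 (S : Submodule ℂ H₁) [CompleteSpace S]
    (T : Submodule ℂ H₂) [CompleteSpace T] (A : H₁ →L[ℂ] H₂) : H₁ →L[ℂ] H₂ :=
  projC T ∘L A ∘L (1 - projC S)

noncomputable def blk21 (S : Submodule ℂ H₁) [CompleteSpace S]
    (T : Submodule ℂ H₂) [CompleteSpace T] (A : H₁ →L[ℂ] H₂) : H₁ →L[ℂ] H₂ :=
  (1 - projC T) ∘L A ∘L projC S

noncomputable def blk22 (S : Submodule ℂ H₁) [CompleteSpace S]
    (T : Submodule ℂ H₂) [CompleteSpace T] (A : H₁ →L[ℂ] H₂) : H₁ →L[ℂ] H₂ :=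
  (1 - projC T) ∘L A ∘L (1 - projC S)

/-!
If `P` is idempotent with `R(P*) = S`, then `P*` fixes `S`, i.e. `P_S P = P_S`; together with
`P_{T⊥} A P = 0` this gives `A21 = A22 (-P)`, hence `R(A21) ⊆ R(A22)`. Conversely, Douglas' lemma
factors `A21 = A22 D`, and `P = P_S - P_{S⊥} D P_S` satisfies `P P_S = P` and `P_S P = P_S`, which
makes it an idempotent with `R(P*) = S`, while `P_{T⊥} A P = A21 - A22 D P_S = 0`. The conditions
on `Q` are the same ones for `Q*` and `A*`, with `S` and `T` exchanged, and `(A*)21 = A12*`.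
-/

theorem IsIdempotentElem.of_mul_eq_of_mul_eq {R : Type*} [Semigroup R] {e p : R}
    (hep : e * p = e) (hpe : p * e = p) : IsIdempotentElem e :=
  calc e * e = e * p * e := by rw [hep]
    _ = e := by rw [mul_assoc, hpe, hep]

theorem IsIdempotentElem.sub_one_sub_mul_mul_mul {R : Type*} [Ring R] {p : R}
    (hp : IsIdempotentElem p) (d : R) : (p - (1 - p) * d * p) * p = p - (1 - p) * d * p := by
  rw [sub_mul, mul_assoc _ p, hp.eq]

theorem IsIdempotentElem.mul_sub_one_sub_mul_mul {R : Type*} [Ring R] {p : R}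
    (hp : IsIdempotentElem p) (d : R) : p * (p - (1 - p) * d * p) = p := by
  rw [mul_sub, ← mul_assoc, ← mul_assoc, mul_sub, mul_one, hp.eq, sub_self, zero_mul, zero_mul,
    sub_zero]

theorem ContinuousLinearMap.IsIdempotentElem.mul_eq_right_iff {R M : Type*} [Semiring R]
    [TopologicalSpace M] [AddCommMonoid M] [Module R M] {q f : M →L[R] M}
    (hq : IsIdempotentElem q) :
    q * f = f ↔ LinearMap.range (f : M →ₗ[R] M) ≤ LinearMap.range (q : M →ₗ[R] M) := by
  rw [← LinearMap.IsIdempotentElem.comp_eq_right_iff hq.toLinearMap, ← toLinearMap_comp, coe_inj,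
    mul_def]

section Douglas

open Filter Topology

variable {𝕜 E F G : Type*} [RCLike 𝕜] [NormedAddCommGroup E] [NormedSpace 𝕜 E] [CompleteSpace E]
  [NormedAddCommGroup F] [NormedSpace 𝕜 F]
  [NormedAddCommGroup G] [InnerProductSpace 𝕜 G] [CompleteSpace G]

/-- Douglas' factorization lemma. -/
theorem ContinuousLinearMap.exists_eq_comp_of_range_le {B : E →L[𝕜] F} {C : G →L[𝕜] F}
    (h : LinearMap.range (B : E →ₗ[𝕜] F) ≤ LinearMap.range (C : G →ₗ[𝕜] F)) :
    ∃ D : E →L[𝕜] G, B = C ∘L D := by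
  -- Over a field every module is projective, so `B` has a linear (possibly unbounded) lift.
  obtain ⟨D₀, hD₀⟩ := Module.projective_lifting_property (C : G →ₗ[𝕜] F).rangeRestrict
    ((B : E →ₗ[𝕜] F).codRestrict _ fun x ↦ h ⟨x, rfl⟩) (LinearMap.surjective_rangeRestrict _)
  have hCD₀ : ∀ x, C (D₀ x) = B x := fun x ↦ congr(($hD₀ x : F))
  set K := LinearMap.ker (C : G →ₗ[𝕜] F)
  have : CompleteSpace K := C.isClosed_ker.completeSpace_coe
  have hC_orth : ∀ z, C (Kᗮ.starProjection z) = C z := fun z ↦ by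
    have hz : C (K.starProjection z) = 0 := starProjection_apply_mem K z
    rw [starProjection_orthogonal_val, map_sub, hz, sub_zero]
  -- Projected onto `(ker C)ᗮ`, the lift is the only one with values there, so its graph is closed.
  let D : E →ₗ[𝕜] G := Kᗮ.starProjection.toLinearMap ∘ₗ D₀
  have hCD : ∀ x, C (D x) = B x := fun x ↦ (hC_orth _).trans (hCD₀ x)
  have hD_closed : ∀ (u : ℕ → E) (x y), Tendsto u atTop (𝓝 x) → Tendsto (D ∘ u) atTop (𝓝 y) →
      y = D x := by
    intro u x y hu hDu
    have hy : y ∈ Kᗮ := K.isClosed_orthogonal.mem_of_tendsto hDu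
      (Eventually.of_forall fun n ↦ starProjection_apply_mem _ _)
    have hCy : C y = B x := tendsto_nhds_unique ((C.continuous.tendsto y).comp hDu)
      (by simpa [Function.comp_def, hCD] using (B.continuous.tendsto x).comp hu)
    have hker : y - D₀ x ∈ K := by simp [K, hCy, hCD₀]
    calc y = Kᗮ.starProjection y := (starProjection_eq_self_iff.mpr hy).symm
      _ = Kᗮ.starProjection (D₀ x) := by
        rw [← sub_eq_zero, ← map_sub, starProjection_orthogonal_val,
          starProjection_eq_self_iff.mpr hker, sub_self]
  exact ⟨ContinuousLinearMap.ofSeqClosedGraph hD_closed, by ext x; exact (hCD x).symm⟩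

end Douglas

section OrthogonalProjection

variable {𝕜 H : Type*} [RCLike 𝕜] [NormedAddCommGroup H] [InnerProductSpace 𝕜 H]

theorem ContinuousLinearMap.IsIdempotentElem.adjoint [CompleteSpace H] {P : H →L[𝕜] H}
    (hP : IsIdempotentElem P) : IsIdempotentElem (adjoint P) :=
  star_eq_adjoint P ▸ hP.star

variable (K : Submodule 𝕜 H) [K.HasOrthogonalProjection]

theorem Submodule.range_le_iff_one_sub_starProjection_comp_eq_zero {E : Type*} [AddCommGroup E]
    [Module 𝕜 E] [TopologicalSpace E] (B : E →L[𝕜] H) :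
    LinearMap.range (B : E →ₗ[𝕜] H) ≤ K ↔ (1 - K.starProjection) ∘L B = 0 := by
  conv_lhs => rw [← K.orthogonal_orthogonal, ← ker_starProjection]
  rw [LinearMap.range_le_ker_iff, ← toLinearMap_comp, ← toLinearMap_zero, coe_inj,
    starProjection_orthogonal']

theorem Submodule.range_adjoint_eq_iff [CompleteSpace H] {P : H →L[𝕜] H}
    (hP : IsIdempotentElem P) :
    LinearMap.range (adjoint P : H →ₗ[𝕜] H) = K ↔
      P * K.starProjection = P ∧ K.starProjection * P = K.starProjection := by
  have hp_star : star K.starProjection = K.starProjection :=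
    (isSelfAdjoint_starProjection K).star_eq
  rw [← star_inj (x := P * _), ← star_inj (x := K.starProjection * P), star_mul, star_mul, hp_star,
    star_eq_adjoint, K.isIdempotentElem_starProjection.mul_eq_right_iff,
    hP.adjoint.mul_eq_right_iff, range_starProjection, le_antisymm_iff]

end OrthogonalProjection

theorem projC_eq_starProjection {H : Type*} [NormedAddCommGroup H] [InnerProductSpace ℂ H]
    [CompleteSpace H] (S : Submodule ℂ H) [CompleteSpace S] : projC S = S.starProjection :=
  rfl

section Blocks

variable (S : Submodule ℂ H₁) [CompleteSpace S] (T : Submodule ℂ H₂) [CompleteSpace T]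
  (A : H₁ →L[ℂ] H₂)

theorem adjoint_blk12 : adjoint (blk12 S T A) = blk21 T S (adjoint A) := by
  simp only [blk12, blk21, projC_eq_starProjection, ← starProjection_orthogonal', adjoint_comp,
    (isSelfAdjoint_starProjection _).adjoint_eq, comp_assoc]

theorem adjoint_blk22 : adjoint (blk22 S T A) = blk22 T S (adjoint A) := by
  simp only [blk22, projC_eq_starProjection, ← starProjection_orthogonal', adjoint_comp,
    (isSelfAdjoint_starProjection _).adjoint_eq, comp_assoc]

theorem blk21_eq_blk22_comp_neg {P : H₁ →L[ℂ] H₁}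
    (hpP : S.starProjection * P = S.starProjection)
    (hAP : LinearMap.range (A ∘L P : H₁ →ₗ[ℂ] H₂) ≤ T) :
    blk21 S T A = blk22 S T A ∘L (-P) := by
  rw [T.range_le_iff_one_sub_starProjection_comp_eq_zero] at hAP
  have hpP' : (1 - S.starProjection) * -P = S.starProjection - P := by
    rw [mul_neg, sub_mul, one_mul, hpP, neg_sub]
  simp only [blk21, blk22, projC_eq_starProjection]
  rw [comp_assoc, comp_assoc, ← ContinuousLinearMap.mul_def, hpP', comp_sub, comp_sub, hAP,
    sub_zero]

theorem range_comp_le_of_blk21_eq_blk22_comp {D : H₁ →L[ℂ] H₁}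
    (hD : blk21 S T A = blk22 S T A ∘L D) :
    LinearMap.range (A ∘L (S.starProjection - (1 - S.starProjection) * D * S.starProjection) :
      H₁ →ₗ[ℂ] H₂) ≤ T := by
  have hp := S.isIdempotentElem_starProjection
  have hDp : blk22 S T A ∘L D ∘L S.starProjection = blk21 S T A := by
    rw [← comp_assoc, ← hD]
    simp only [blk21, projC_eq_starProjection, comp_assoc, ← ContinuousLinearMap.mul_def, hp.eq]
  rw [T.range_le_iff_one_sub_starProjection_comp_eq_zero]
  calc (1 - T.starProjection) ∘L A ∘L
        (S.starProjection - (1 - S.starProjection) * D * S.starProjection)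
      = blk21 S T A - blk22 S T A ∘L D ∘L S.starProjection := by
        simp only [blk21, blk22, projC_eq_starProjection]
        rw [ContinuousLinearMap.mul_def, ContinuousLinearMap.mul_def, comp_sub, comp_sub]
        simp only [comp_assoc]
    _ = 0 := by rw [hDp, sub_self]

theorem exists_isIdempotentElem_range_adjoint_eq_iff :
    (∃ P : H₁ →L[ℂ] H₁, IsIdempotentElem P ∧ LinearMap.range (adjoint P : H₁ →ₗ[ℂ] H₁) = S ∧
      LinearMap.range (A ∘L P : H₁ →ₗ[ℂ] H₂) ≤ T) ↔
    LinearMap.range (blk21 S T A : H₁ →ₗ[ℂ] H₂) ≤ LinearMap.range (blk22 S T A : H₁ →ₗ[ℂ] H₂) := by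
  constructor
  · rintro ⟨P, hP, hPS, hAP⟩
    rw [blk21_eq_blk22_comp_neg S T A ((S.range_adjoint_eq_iff hP).mp hPS).2 hAP]
    exact LinearMap.range_comp_le_range _ _
  · intro h
    obtain ⟨D, hD⟩ := exists_eq_comp_of_range_le h
    have hp := S.isIdempotentElem_starProjection
    have hPp := hp.sub_one_sub_mul_mul_mul D
    have hpP := hp.mul_sub_one_sub_mul_mul D
    have hP := IsIdempotentElem.of_mul_eq_of_mul_eq hPp hpP
    exact ⟨_, hP, (S.range_adjoint_eq_iff hP).mpr ⟨hPp, hpP⟩,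
      range_comp_le_of_blk21_eq_blk22_comp S T A hD⟩

end Blocks

theorem complementable_iff_range_inclusions
    (S : Submodule ℂ H₁) [CompleteSpace S] (T : Submodule ℂ H₂) [CompleteSpace T]
    (A : H₁ →L[ℂ] H₂) :
    (∃ (P : H₁ →L[ℂ] H₁) (Q : H₂ →L[ℂ] H₂),
      IsIdempotentElem P ∧ IsIdempotentElem Q ∧
      LinearMap.range (adjoint P : H₁ →ₗ[ℂ] H₁) = S ∧ LinearMap.range (Q : H₂ →ₗ[ℂ] H₂) = T ∧
      LinearMap.range (A ∘L P : H₁ →ₗ[ℂ] H₂) ≤ T ∧ LinearMap.range (adjoint (Q ∘L A) : H₂ →ₗ[ℂ] H₁) ≤ S) ↔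
    (LinearMap.range (blk21 S T A : H₁ →ₗ[ℂ] H₂) ≤ LinearMap.range (blk22 S T A : H₁ →ₗ[ℂ] H₂) ∧
      LinearMap.range (adjoint (blk12 S T A) : H₂ →ₗ[ℂ] H₁) ≤ LinearMap.range (adjoint (blk22 S T A) : H₂ →ₗ[ℂ] H₁)) := by
  rw [adjoint_blk12, adjoint_blk22, ← exists_isIdempotentElem_range_adjoint_eq_iff,
    ← exists_isIdempotentElem_range_adjoint_eq_iff]
  constructor
  · rintro ⟨P, Q, hP, hQ, hPS, hQT, hAP, hQA⟩
    refine ⟨⟨P, hP, hPS, hAP⟩, adjoint Q, hQ.adjoint, ?_, ?_⟩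
    · rwa [adjoint_adjoint]
    · rwa [← adjoint_comp]
  · rintro ⟨⟨P, hP, hPS, hAP⟩, R, hR, hRT, hAR⟩
    refine ⟨P, adjoint R, hP, hR.adjoint, hPS, hRT, hAP, ?_⟩
    rwa [adjoint_comp, adjoint_adjoint]
end

section
/- Let A, B : H1 → H2 be bounded operators with R(A*) ⊆ R(|B|^{1/2}). If {y_n} is a sequence in H1, d ∈ H2 and M > 0 satisfy A y_n → d, B y_n → 0, and ⟨|B| y_n, y_n⟩ ≤ M for all n, then d = 0. -/
/-!
With `Ch = |B|^{1/2}` write `A* d = Ch w` and `x n = Ch (y n)`. Then `‖x n‖² = ⟨|B| y n, y n⟩ ≤ M`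
and `‖Ch (x n)‖ = ‖B (y n)‖ → 0`, while `⟨x n, w⟩ = ⟨A (y n), d⟩ → ‖d‖²`. A bounded sequence in
the range of `Ch` whose image under `Ch` tends to zero tends to zero weakly: pairing with `Ch u` it
does by adjunction, with the closure of `range Ch` by equicontinuity, and with its orthogonal
complement trivially. Hence `‖d‖² = 0`.
-/

open ContinuousLinearMap Submodule

variable {H₁ H₂ : Type*} [NormedAddCommGroup H₁] [InnerProductSpace ℂ H₁] [CompleteSpace H₁]
  [NormedAddCommGroup H₂] [InnerProductSpace ℂ H₂] [CompleteSpace H₂]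

open Filter Topology

section

variable {𝕜 E F ι : Type*} [RCLike 𝕜] [NormedAddCommGroup E] [InnerProductSpace 𝕜 E]
  [NormedAddCommGroup F] [InnerProductSpace 𝕜 F]

theorem isClosed_setOf_tendsto_inner_zero {l : Filter ι} {x : ι → E} {C : ℝ}
    (hbdd : ∀ i, ‖x i‖ ≤ C) :
    IsClosed {w : E | Tendsto (fun i => inner 𝕜 (x i) w) l (𝓝 0)} := by
  have hnorm : ∃ C, ∀ i, ‖innerSL 𝕜 (x i)‖ ≤ C :=
    ⟨C, fun i => (innerSL_apply_norm 𝕜 (x i)).trans_le (hbdd i)⟩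
  have hequi := ((NormedSpace.equicontinuous_TFAE fun i => innerSL 𝕜 (x i)).out 5 1).mp hnorm
  exact hequi.isClosed_setOfPred_tendsto (f := fun _ => 0) continuous_const

variable [CompleteSpace E] [CompleteSpace F]

theorem ContinuousLinearMap.norm_apply_eq_of_adjoint_comp_self_eq {G : Type*}
    [NormedAddCommGroup G] [InnerProductSpace 𝕜 G] [CompleteSpace G] {R : E →L[𝕜] G}
    {S : E →L[𝕜] F} (h : adjoint R ∘L R = adjoint S ∘L S) (z : E) : ‖R z‖ = ‖S z‖ := by
  have hsq : ‖R z‖ ^ 2 = ‖S z‖ ^ 2 := by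
    rw [apply_norm_sq_eq_inner_adjoint_left, apply_norm_sq_eq_inner_adjoint_left, h]
  exact (pow_left_inj₀ (norm_nonneg _) (norm_nonneg _) two_ne_zero).mp hsq

theorem tendsto_inner_zero_of_tendsto_adjoint_apply {l : Filter ι} {T : F →L[𝕜] E}
    {x : ι → E} {C : ℝ} (hbdd : ∀ i, ‖x i‖ ≤ C)
    (hrange : ∀ i, x i ∈ LinearMap.range (T : F →ₗ[𝕜] E))
    (hT : Tendsto (fun i => adjoint T (x i)) l (𝓝 0)) (w : E) :
    Tendsto (fun i => inner 𝕜 (x i) w) l (𝓝 0) := by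
  set K := (LinearMap.range (T : F →ₗ[𝕜] E)).topologicalClosure
  have hrange_sub : (LinearMap.range (T : F →ₗ[𝕜] E) : Set E) ⊆
      {w : E | Tendsto (fun i => inner 𝕜 (x i) w) l (𝓝 0)} := by
    rintro _ ⟨u, rfl⟩
    have h := hT.inner (𝕜 := 𝕜) (tendsto_const_nhds (x := u))
    simpa only [adjoint_inner_left, inner_zero_left, coe_coe, Set.mem_ofPred_eq] using h
  have hK : K.starProjection w ∈ {w : E | Tendsto (fun i => inner 𝕜 (x i) w) l (𝓝 0)} :=
    closure_minimal hrange_sub (isClosed_setOf_tendsto_inner_zero hbdd) (K.starProjection_apply_mem w)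
  refine hK.congr fun i => ?_
  rw [eq_comm, ← sub_eq_zero, ← inner_sub_right]
  exact (K.mem_orthogonal _).mp (K.sub_starProjection_mem_orthogonal w) (x i)
    (le_topologicalClosure _ (hrange i))

end

theorem lemma_limit_zero_general (A B : H₁ →L[ℂ] H₂) (Ch : H₁ →L[ℂ] H₁)
    (hCh : Ch.IsPositive) (hCh4 : Ch ∘L Ch ∘L Ch ∘L Ch = adjoint B ∘L B)
    (hrange : LinearMap.range (adjoint A : H₂ →ₗ[ℂ] H₁) ≤ LinearMap.range (Ch : H₁ →ₗ[ℂ] H₁))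
    (y : ℕ → H₁) (d : H₂) (M : ℝ)
    (hA : Filter.Tendsto (fun n => A (y n)) Filter.atTop (nhds d))
    (hB : Filter.Tendsto (fun n => B (y n)) Filter.atTop (nhds 0))
    (hbound : ∀ n, (inner ℂ ((Ch ∘L Ch) (y n)) (y n) : ℂ).re ≤ M) :
    d = 0 := by
  have hsa : adjoint Ch = Ch := isSelfAdjoint_iff'.mp hCh.isSelfAdjoint
  have hbdd : ∀ n, ‖Ch (y n)‖ ≤ √M := fun n =>
    Real.le_sqrt_of_sq_le <| by
      rw [apply_norm_sq_eq_inner_adjoint_left, hsa]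
      exact hbound n
  have hCh2 : ∀ z, ‖Ch (Ch z)‖ = ‖B z‖ := by
    refine norm_apply_eq_of_adjoint_comp_self_eq (R := Ch ∘L Ch) (S := B) ?_
    rw [adjoint_comp, hsa, ← hCh4, comp_assoc]
  have hCh2y : Tendsto (fun n => adjoint Ch (Ch (y n))) atTop (𝓝 0) := by
    rw [hsa, tendsto_zero_iff_norm_tendsto_zero]
    simpa only [hCh2] using tendsto_zero_iff_norm_tendsto_zero.mp hB
  obtain ⟨w, hw⟩ : ∃ w, Ch w = adjoint A d := hrange ⟨d, rfl⟩
  have hpair : ∀ n, inner ℂ (Ch (y n)) w = inner ℂ (A (y n)) d := fun n => by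
    rw [← adjoint_inner_right, hsa, hw, adjoint_inner_right]
  have hdd : Tendsto (fun n => inner ℂ (Ch (y n)) w) atTop (𝓝 (inner ℂ d d)) := by
    simpa only [hpair] using hA.inner (tendsto_const_nhds (x := d))
  have h0 := tendsto_inner_zero_of_tendsto_adjoint_apply hbdd (fun n => ⟨y n, rfl⟩) hCh2y w
  exact inner_self_eq_zero.mp (tendsto_nhds_unique hdd h0)

theorem lemma_limit_zero (A B : H₁ →L[ℂ] H₂) (Ch : H₁ →L[ℂ] H₁)
    (hCh : Ch.IsPositive) (hCh4 : Ch ∘L Ch ∘L Ch ∘L Ch = adjoint B ∘L B)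
    (hrange : LinearMap.range (adjoint A : H₂ →ₗ[ℂ] H₁) ≤ LinearMap.range (Ch : H₁ →ₗ[ℂ] H₁))
    (y : ℕ → H₁) (d : H₂) (M : ℝ) (hM : 0 < M)
    (hA : Filter.Tendsto (fun n => A (y n)) Filter.atTop (nhds d))
    (hB : Filter.Tendsto (fun n => B (y n)) Filter.atTop (nhds 0))
    (hbound : ∀ n, (inner ℂ ((Ch ∘L Ch) (y n)) (y n) : ℂ).re ≤ M) :
    d = 0 :=
  lemma_limit_zero_general A B Ch hCh hCh4 hrange y d M hA hB hbound
end

section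
/- If A ≤⁻ B in the minus order and A ≤⁻ B holds via projections, then R(A) ⊆ R(B) and R(A*) ⊆ R(B*). Moreover, if B is a projection (idempotent) and A ≤⁻ B, then A is also a projection. -/
open ContinuousLinearMap Submodule

variable {H₁ H₂ : Type*} [NormedAddCommGroup H₁] [InnerProductSpace ℂ H₁] [CompleteSpace H₁]
  [NormedAddCommGroup H₂] [InnerProductSpace ℂ H₂] [CompleteSpace H₂]

theorem IsIdempotentElem.of_eq_mul_of_eq_mul {M : Type*} [Semigroup M] {a b p q : M}
    (hb : IsIdempotentElem b) (hp : IsIdempotentElem p) (hqb : a = q * b) (hbp : a = b * p) :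
    IsIdempotentElem a :=
  calc a * a = (q * b) * (b * p) := by rw [← hqb, ← hbp]
    _ = q * (b * b) * p := by simp only [mul_assoc]
    _ = a * p := by rw [hb.eq, hqb]
    _ = b * (p * p) := by rw [hbp, mul_assoc]
    _ = a := by rw [hp.eq, hbp]

theorem minus_le_range_and_projection (A B : H₁ →L[ℂ] H₂)
    (h : ∃ (Q : H₂ →L[ℂ] H₂) (P : H₁ →L[ℂ] H₁),
      IsIdempotentElem Q ∧ IsIdempotentElem P ∧ A = Q ∘L B ∧ A = B ∘L P) :
    (LinearMap.range (A : H₁ →ₗ[ℂ] H₂) ≤ LinearMap.range (B : H₁ →ₗ[ℂ] H₂) ∧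
      LinearMap.range (adjoint A : H₂ →ₗ[ℂ] H₁) ≤ LinearMap.range (adjoint B : H₂ →ₗ[ℂ] H₁)) ∧
    (∀ A' B' : H₁ →L[ℂ] H₁, IsIdempotentElem B' →
      (∃ (Q : H₁ →L[ℂ] H₁) (P : H₁ →L[ℂ] H₁),
        IsIdempotentElem Q ∧ IsIdempotentElem P ∧ A' = Q ∘L B' ∧ A' = B' ∘L P) →
      IsIdempotentElem A') := by
  obtain ⟨Q, P, -, -, hQB, hBP⟩ := h
  have hA_adjoint : adjoint A = adjoint B ∘L adjoint Q := by rw [hQB, adjoint_comp]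
  refine ⟨⟨?_, ?_⟩, ?_⟩
  · rw [hBP]
    exact LinearMap.range_comp_le_range _ _
  · rw [hA_adjoint]
    exact LinearMap.range_comp_le_range _ _
  · rintro A' B' hB' ⟨Q', P', -, hP', hQB', hBP'⟩
    exact hB'.of_eq_mul_of_eq_mul hP' hQB' hBP'
end

section
/- Let A, B : H1 → H2 be parallel summable, i.e., R(A) ⊆ R(A+B) and R(A*) ⊆ R(A*+B*). Then the range of the parallel sum satisfies R(A : B) = R(A) ∩ R(B). -/
/-!
Write `S = A + B`, so that `Ch² = |S|`, `Dh² = |S*|` and `S = U |S|` is the polar decomposition.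
As `U` is isometric on the range of `|S|` and vanishes on its kernel, `U*U` is the identity on
the range of `Ch`; hence `Dh` and `U Ch U*` are both positive fourth roots of `S S*`, and
`Dh U = U Ch U* U = U Ch`. Thus `T := Dh U` satisfies `T Ch = S`,
and `T` is injective on `(ker T)ᗮ`, which contains the ranges of `Ch` and `EA`. So whenever
`S w = A x` we get `EA x = Ch w`, and with `FA* Ch = A` this gives
`(A : B) x = A x - A w = B w`. Then `(A : B) x = A (x - w) = B w` proves `⊆`; for `A a = B b`
the choice `x = a + b`, `w = b` proves `⊇`.
-/

open ContinuousLinearMap Submodule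

theorem CFC.eq_of_pow_four_eq {A : Type*} [CStarAlgebra A] [PartialOrder A] [StarOrderedRing A]
    {a b : A} (ha : 0 ≤ a) (hb : 0 ≤ b) (h : a ^ 4 = b ^ 4) : a = b := by
  have hsq : a * a = b * b := by
    rw [← CFC.mul_self_eq_mul_self_iff (a * a) (b * b) ha.isSelfAdjoint.mul_self_nonneg
      hb.isSelfAdjoint.mul_self_nonneg]
    simpa only [pow_succ, pow_zero, one_mul, mul_assoc] using h
  exact (CFC.mul_self_eq_mul_self_iff a b).mp hsq

theorem LinearMap.range_eq_inf_range_of_forall_apply_eq {R M N : Type*} [Ring R]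
    [AddCommGroup M] [Module R M] [AddCommGroup N] [Module R N] {A B P : M →ₗ[R] N}
    (hA : range A ≤ range (A + B)) (hP : ∀ x w, (A + B) w = A x → P x = B w) :
    range P = range A ⊓ range B := by
  apply le_antisymm
  · rintro _ ⟨x, rfl⟩
    obtain ⟨w, hw⟩ := hA ⟨x, rfl⟩
    have hBw : B w = A (x - w) := by
      rw [map_sub, ← hw, add_apply]
      abel
    exact ⟨⟨x - w, by rw [hP x w hw, hBw]⟩, ⟨w, (hP x w hw).symm⟩⟩
  · rintro y ⟨⟨a, rfl⟩, ⟨b, hb⟩⟩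
    refine ⟨a + b, hb ▸ hP (a + b) b ?_⟩
    rw [add_apply, hb, map_add, add_comm]

namespace ContinuousLinearMap

section RCLike

variable {𝕜 E F : Type*} [RCLike 𝕜]
  [NormedAddCommGroup E] [InnerProductSpace 𝕜 E] [NormedAddCommGroup F] [InnerProductSpace 𝕜 F]

local notation "⟪" x ", " y "⟫" => @inner 𝕜 _ _ x y

theorem eq_of_apply_eq_of_mem_orthogonal_ker (T : E →L[𝕜] F) {a b : E}
    (ha : a ∈ T.kerᗮ) (hb : b ∈ T.kerᗮ) (h : T a = T b) : a = b := by
  have hmem : a - b ∈ T.ker ⊓ T.kerᗮ :=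
    ⟨by simp [h], sub_mem ha hb⟩
  rwa [inf_orthogonal_eq_bot, mem_bot, sub_eq_zero] at hmem

theorem _root_.IsSelfAdjoint.range_le_orthogonal_ker [CompleteSpace E] {C : E →L[𝕜] E}
    (hC : IsSelfAdjoint C) : C.range ≤ C.kerᗮ := by
  rintro _ ⟨x, rfl⟩ z hz
  have hz : C z = 0 := hz
  rw [coe_coe, ← adjoint_inner_left, isSelfAdjoint_iff'.mp hC, hz, inner_zero_left]

theorem _root_.IsSelfAdjoint.orthogonal_range_comp_self [CompleteSpace E] {C : E →L[𝕜] E}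
    (hC : IsSelfAdjoint C) : (C ∘L C).rangeᗮ = C.ker := by
  have hadj : adjoint C = C := isSelfAdjoint_iff'.mp hC
  rw [orthogonal_range, adjoint_comp, hadj]
  nth_rewrite 1 [← hadj]
  exact ker_adjoint_comp_self C

theorem adjoint_comp_self_comp_eq_of_ker_le [CompleteSpace E] [CompleteSpace F]
    {C : E →L[𝕜] E} {U : E →L[𝕜] F} (hC : IsSelfAdjoint C) (hker : C.ker ≤ U.ker)
    (hiso : C ∘L C ∘L C ∘L C = adjoint (U ∘L (C ∘L C)) ∘L (U ∘L (C ∘L C))) :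
    adjoint U ∘L U ∘L C = C := by
  have hCsym : ∀ a b, ⟪C a, b⟫ = ⟪a, C b⟫ := fun a b => by
    rw [← adjoint_inner_right, isSelfAdjoint_iff'.mp hC]
  have hext : ∀ a b : E, a ∈ C.kerᗮ → b ∈ C.kerᗮ → (∀ w, ⟪a, C (C w)⟫ = ⟪b, C (C w)⟫) →
      a = b := by
    intro a b ha hb h
    have hperp : a - b ∈ (C ∘L C).rangeᗮ := by
      rintro _ ⟨w, rfl⟩
      rw [inner_eq_zero_symm, inner_sub_left, sub_eq_zero]
      exact h w
    rw [hC.orthogonal_range_comp_self, LinearMap.mem_ker, coe_coe, map_sub, sub_eq_zero] at hperp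
    exact C.eq_of_apply_eq_of_mem_orthogonal_ker ha hb hperp
  have hP : ∀ a, adjoint U (U a) ∈ C.kerᗮ := fun a z hz => by
    have hUz : U z = 0 := hker hz
    rw [adjoint_inner_right, hUz, inner_zero_left]
  have hrange : ∀ x, C x ∈ C.kerᗮ := fun x => hC.range_le_orthogonal_ker ⟨x, rfl⟩
  have hsq : ∀ x, adjoint U (U (C (C x))) = C (C x) := fun x =>
    hext _ _ (hP _) (hrange _) fun w => by
      have := congr(⟪$hiso x, w⟫)
      rw [adjoint_inner_left, ← hCsym, ← hCsym]
      simpa only [comp_apply, adjoint_inner_left] using this.symm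
  ext x
  exact hext _ _ (hP _) (hrange _) fun w => by
    rw [comp_apply, comp_apply, adjoint_inner_left, ← adjoint_inner_right, hsq]

theorem sub_adjoint_comp_apply_eq [CompleteSpace E] [CompleteSpace F]
    {A B T : E →L[𝕜] F} {C EA : E →L[𝕜] E} {FA : F →L[𝕜] E}
    (hC : IsSelfAdjoint C) (hTC : T ∘L C = A + B) (hCT : C.range ≤ T.kerᗮ)
    (hEA : T ∘L EA = A) (hEA' : EA.range ≤ T.kerᗮ) (hFA : C ∘L FA = adjoint A)
    {x w : E} (hw : (A + B) w = A x) : (A - adjoint FA ∘L EA) x = B w := by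
  have hEAx : EA x = C w := by
    refine T.eq_of_apply_eq_of_mem_orthogonal_ker (hEA' ⟨x, rfl⟩) (hCT ⟨w, rfl⟩) ?_
    rw [← comp_apply T EA, hEA, ← comp_apply T C, hTC, hw]
  have hFAC : adjoint FA ∘L C = A := by
    rw [← isSelfAdjoint_iff'.mp hC, ← adjoint_comp, hFA, adjoint_adjoint]
  rw [sub_apply, comp_apply, hEAx, ← comp_apply (adjoint FA), hFAC, ← hw, add_apply]
  abel

end RCLike

section Complex

variable {E F : Type*} [NormedAddCommGroup E] [InnerProductSpace ℂ E] [CompleteSpace E]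
  [NormedAddCommGroup F] [InnerProductSpace ℂ F] [CompleteSpace F]

theorem IsPositive.comp_eq_comp_of_pow_four_eq {C : E →L[ℂ] E} {D : F →L[ℂ] F} {U : E →L[ℂ] F}
    (hC : C.IsPositive) (hD : D.IsPositive) (hUU : adjoint U ∘L U ∘L C = C)
    (hD4 : D ∘L D ∘L D ∘L D = (U ∘L (C ∘L C)) ∘L adjoint (U ∘L (C ∘L C))) :
    D ∘L U = U ∘L C := by
  have hadj : adjoint C = C := isSelfAdjoint_iff'.mp hC.isSelfAdjoint
  have hCUU : ∀ y, C (adjoint U (U y)) = C y := fun y => by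
    simpa [adjoint_comp, hadj] using congr($(congrArg adjoint hUU) y)
  have hDconj : D = U ∘L C ∘L adjoint U := by
    refine CFC.eq_of_pow_four_eq ((nonneg_iff_isPositive _).mpr hD)
      ((nonneg_iff_isPositive _).mpr (hC.conj_adjoint U)) ?_
    ext y
    have := congr($hD4 y)
    simp only [pow_succ, pow_zero, one_mul, mul_def, comp_apply, adjoint_comp, hadj] at this ⊢
    rw [this, hCUU, hCUU, hCUU]
  ext x
  simp only [hDconj, comp_apply, hCUU]

end Complex

end ContinuousLinearMap

variable {H₁ H₂ : Type*} [NormedAddCommGroup H₁] [InnerProductSpace ℂ H₁] [CompleteSpace H₁]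
  [NormedAddCommGroup H₂] [InnerProductSpace ℂ H₂] [CompleteSpace H₂]

theorem range_parallel_sum_general    (A B : H₁ →L[ℂ] H₂)
    (Ch : H₁ →L[ℂ] H₁) (Dh : H₂ →L[ℂ] H₂) (U : H₁ →L[ℂ] H₂)
    (EA : H₁ →L[ℂ] H₁) (FA : H₂ →L[ℂ] H₁)
    (hCh : Ch.IsPositive) (hCh4 : Ch ∘L Ch ∘L Ch ∘L Ch = adjoint (A + B) ∘L (A + B))
    (hDh : Dh.IsPositive) (hDh4 : Dh ∘L Dh ∘L Dh ∘L Dh = (A + B) ∘L adjoint (A + B))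
    (hU : A + B = U ∘L (Ch ∘L Ch)) (hU0 : ∀ x, (A + B) x = 0 → U x = 0)
    (hEA : (Dh ∘L U) ∘L EA = A) (hEA' : LinearMap.range (EA : H₁ →ₗ[ℂ] H₁) ≤ (LinearMap.ker (Dh ∘L U : H₁ →ₗ[ℂ] H₂))ᗮ)
    (hFA : Ch ∘L FA = adjoint A)
    (hsum₁ : LinearMap.range (A : H₁ →ₗ[ℂ] H₂) ≤ LinearMap.range ((A + B : H₁ →L[ℂ] H₂) : H₁ →ₗ[ℂ] H₂)) :
    LinearMap.range ((A - adjoint FA ∘L EA : H₁ →L[ℂ] H₂) : H₁ →ₗ[ℂ] H₂) =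
      LinearMap.range (A : H₁ →ₗ[ℂ] H₂) ⊓ LinearMap.range (B : H₁ →ₗ[ℂ] H₂) := by
  have hC : IsSelfAdjoint Ch := hCh.isSelfAdjoint
  have hkerU : Ch.ker ≤ U.ker := fun z hz => by
    have hz : Ch z = 0 := hz
    exact hU0 z (by rw [hU, comp_apply, comp_apply, hz, map_zero, map_zero])
  rw [hU] at hCh4 hDh4
  have hUU := adjoint_comp_self_comp_eq_of_ker_le hC hkerU hCh4
  have hDU := hCh.comp_eq_comp_of_pow_four_eq hDh hUU hDh4
  have hTC : (Dh ∘L U) ∘L Ch = A + B := by rw [hDU, hU, comp_assoc]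
  have hkerT : (Dh ∘L U).ker ≤ Ch.ker := fun z hz => by
    have hUCz : U (Ch z) = 0 := by simpa [← comp_apply Dh U, hDU] using hz
    simpa [hUCz] using congr($hUU z).symm
  have hCT : Ch.range ≤ (Dh ∘L U).kerᗮ :=
    hC.range_le_orthogonal_ker.trans (orthogonal_le hkerT)
  exact LinearMap.range_eq_inf_range_of_forall_apply_eq hsum₁ fun x w hw =>
    sub_adjoint_comp_apply_eq hC hTC hCT hEA hEA' hFA hw

theorem range_parallel_sum    (A B : H₁ →L[ℂ] H₂)
    (Ch : H₁ →L[ℂ] H₁) (Dh : H₂ →L[ℂ] H₂) (U : H₁ →L[ℂ] H₂)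
    (EA EB : H₁ →L[ℂ] H₁) (FA FB : H₂ →L[ℂ] H₁)
    (hCh : Ch.IsPositive) (hCh4 : Ch ∘L Ch ∘L Ch ∘L Ch = adjoint (A + B) ∘L (A + B))
    (hDh : Dh.IsPositive) (hDh4 : Dh ∘L Dh ∘L Dh ∘L Dh = (A + B) ∘L adjoint (A + B))
    (hU : A + B = U ∘L (Ch ∘L Ch)) (hU0 : ∀ x, (A + B) x = 0 → U x = 0)
    (hEA : (Dh ∘L U) ∘L EA = A) (hEA' : LinearMap.range (EA : H₁ →ₗ[ℂ] H₁) ≤ (LinearMap.ker (Dh ∘L U : H₁ →ₗ[ℂ] H₂))ᗮ)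
    (hEB : (Dh ∘L U) ∘L EB = B) (hEB' : LinearMap.range (EB : H₁ →ₗ[ℂ] H₁) ≤ (LinearMap.ker (Dh ∘L U : H₁ →ₗ[ℂ] H₂))ᗮ)
    (hFA : Ch ∘L FA = adjoint A) (hFA' : LinearMap.range (FA : H₂ →ₗ[ℂ] H₁) ≤ (LinearMap.ker (Ch : H₁ →ₗ[ℂ] H₁))ᗮ)
    (hFB : Ch ∘L FB = adjoint B) (hFB' : LinearMap.range (FB : H₂ →ₗ[ℂ] H₁) ≤ (LinearMap.ker (Ch : H₁ →ₗ[ℂ] H₁))ᗮ)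
    (hsum₁ : LinearMap.range (A : H₁ →ₗ[ℂ] H₂) ≤ LinearMap.range ((A + B : H₁ →L[ℂ] H₂) : H₁ →ₗ[ℂ] H₂))
    (hsum₂ : LinearMap.range (adjoint A : H₂ →ₗ[ℂ] H₁) ≤ LinearMap.range (adjoint (A + B) : H₂ →ₗ[ℂ] H₁)) :
    LinearMap.range ((A - adjoint FA ∘L EA : H₁ →L[ℂ] H₂) : H₁ →ₗ[ℂ] H₂) =
      LinearMap.range (A : H₁ →ₗ[ℂ] H₂) ⊓ LinearMap.range (B : H₁ →ₗ[ℂ] H₂) :=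
  range_parallel_sum_general A B Ch Dh U EA FA hCh hCh4 hDh hDh4 hU hU0 hEA hEA' hFA hsum₁
end

section
/- Let A, B : H1 → H2 be bounded operators such that R(A) ⊆ T, R(A*) ⊆ S, R(B) = T, and R(B*) = S, where S ⊆ H1 and T ⊆ H2 are closed subspaces. Then there exists n₀ ∈ ℕ such that for all n ≥ n₀, R(A + nB) = T and R((A + nB)*) = S. -/
/-!
As `ker B = (range B†)ᗮ = Sᗮ`, the operator `B` restricts to a bijection `S → T` between
Hilbert spaces, hence an isomorphism by the open mapping theorem; `A` restricts to `S → T` too.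
Since `A + n • B = n • (B + n⁻¹ • A)` and the isomorphisms form an open set, the restriction of
`A + n • B` is onto `T` for large `n`. The same argument applied to the adjoints, with `S` and `T`
exchanged, gives the second equality.
-/

open ContinuousLinearMap Submodule Filter Topology

theorem ContinuousLinearEquiv.eventually_surjective_add_natCast_smul {𝕜 E F : Type*} [RCLike 𝕜]
    [NormedAddCommGroup E] [NormedSpace 𝕜 E] [CompleteSpace E]
    [NormedAddCommGroup F] [NormedSpace 𝕜 F]
    (e : E ≃L[𝕜] F) (A : E →L[𝕜] F) :
    ∀ᶠ n : ℕ in atTop, Function.Surjective (A + (n : 𝕜) • (e : E →L[𝕜] F)) := by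
  have hlim : Tendsto (fun n : ℕ ↦ (n : 𝕜)⁻¹ • A + e) atTop (𝓝 e) := by
    simpa using ((tendsto_inv_atTop_nhds_zero_nat (𝕜 := 𝕜)).smul_const A).add_const
      (e : E →L[𝕜] F)
  filter_upwards [hlim e.nhds, eventually_ne_atTop 0] with n ⟨e', he'⟩ hn
  have hn' : (n : 𝕜) ≠ 0 := Nat.cast_ne_zero.2 hn
  beta_reduce at he'
  rw [← smul_inv_smul₀ hn' A, ← smul_add, ← he']
  intro y
  exact ⟨e'.symm ((n : 𝕜)⁻¹ • y), by simp [hn']⟩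

namespace ContinuousLinearMap

variable {𝕜 E F : Type*} [RCLike 𝕜]
  [NormedAddCommGroup E] [InnerProductSpace 𝕜 E] [CompleteSpace E]
  [NormedAddCommGroup F] [InnerProductSpace 𝕜 F] [CompleteSpace F]

theorem exists_equiv_of_range_eq_of_range_adjoint_eq
    {S : Submodule 𝕜 E} {T : Submodule 𝕜 F} [CompleteSpace S] [CompleteSpace T] (B : E →L[𝕜] F)
    (hB : LinearMap.range (B : E →ₗ[𝕜] F) = T)
    (hB' : LinearMap.range (adjoint B : F →ₗ[𝕜] E) = S) :
    ∃ e : S ≃L[𝕜] T, ∀ x : S, (e x : F) = B x := by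
  have hker : LinearMap.ker (B : E →ₗ[𝕜] F) = Sᗮ := by
    rw [← hB', orthogonal_range, adjoint_adjoint]
  let B₀ := (B ∘L S.subtypeL).codRestrict T fun x ↦ hB ▸ ⟨x, rfl⟩
  have hinj : Function.Injective B₀ := by
    refine (injective_iff_map_eq_zero B₀).2 fun x hx ↦ Subtype.ext ?_
    have hx' : (x : E) ∈ S ⊓ Sᗮ := ⟨x.2, hker ▸ congrArg Subtype.val hx⟩
    rwa [S.inf_orthogonal_eq_bot, Submodule.mem_bot] at hx'
  have hsurj : Function.Surjective B₀ := by
    rintro ⟨_, hy⟩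
    obtain ⟨u, rfl⟩ := hB ▸ hy
    obtain ⟨s, hs, s', hs', rfl⟩ := S.exists_add_mem_mem_orthogonal u
    have hBs' : B s' = 0 := LinearMap.mem_ker.1 (hker ▸ hs')
    exact ⟨⟨s, hs⟩, Subtype.ext (by simp [B₀, hBs'])⟩
  exact ⟨.ofBijective B₀ (LinearMap.ker_eq_bot_of_injective hinj)
    (LinearMap.range_eq_top_of_surjective _ hsurj), fun _ ↦ rfl⟩

theorem eventually_range_add_natCast_smul_eq
    {S : Submodule 𝕜 E} {T : Submodule 𝕜 F} (hS : IsClosed (S : Set E)) (hT : IsClosed (T : Set F))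
    (A B : E →L[𝕜] F) (hA : LinearMap.range (A : E →ₗ[𝕜] F) ≤ T)
    (hB : LinearMap.range (B : E →ₗ[𝕜] F) = T)
    (hB' : LinearMap.range (adjoint B : F →ₗ[𝕜] E) = S) :
    ∀ᶠ n : ℕ in atTop, LinearMap.range ((A + (n : 𝕜) • B : E →L[𝕜] F) : E →ₗ[𝕜] F) = T := by
  have := hS.completeSpace_coe
  have := hT.completeSpace_coe
  obtain ⟨e, he⟩ := B.exists_equiv_of_range_eq_of_range_adjoint_eq hB hB'
  let A₀ := (A ∘L S.subtypeL).codRestrict T fun x ↦ hA ⟨x, rfl⟩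
  filter_upwards [e.eventually_surjective_add_natCast_smul A₀] with n hn
  refine le_antisymm ?_ fun y hy ↦ ?_
  · rintro _ ⟨x, rfl⟩
    exact T.add_mem (hA ⟨x, rfl⟩) (T.smul_mem _ (hB ▸ ⟨x, rfl⟩))
  · obtain ⟨x, hx⟩ := hn ⟨y, hy⟩
    exact ⟨x, by simpa [A₀, he] using congrArg Subtype.val hx⟩

end ContinuousLinearMap

variable {H₁ H₂ : Type*} [NormedAddCommGroup H₁] [InnerProductSpace ℂ H₁] [CompleteSpace H₁]
  [NormedAddCommGroup H₂] [InnerProductSpace ℂ H₂] [CompleteSpace H₂]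

theorem range_add_smul_eventually
    (S : Submodule ℂ H₁) (T : Submodule ℂ H₂)
    (hS : IsClosed (S : Set H₁)) (hT : IsClosed (T : Set H₂))
    (A B : H₁ →L[ℂ] H₂)
    (hA : LinearMap.range (A : H₁ →ₗ[ℂ] H₂) ≤ T) (hA' : LinearMap.range (adjoint A : H₂ →ₗ[ℂ] H₁) ≤ S)
    (hB : LinearMap.range (B : H₁ →ₗ[ℂ] H₂) = T) (hB' : LinearMap.range (adjoint B : H₂ →ₗ[ℂ] H₁) = S) :
    ∃ n₀ : ℕ, ∀ n : ℕ, n₀ ≤ n →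
      LinearMap.range ((A + (n : ℂ) • B : H₁ →L[ℂ] H₂) : H₁ →ₗ[ℂ] H₂) = T ∧
      LinearMap.range ((adjoint (A + (n : ℂ) • B) : H₂ →ₗ[ℂ] H₁)) = S := by
  have hB'' : LinearMap.range (adjoint (adjoint B) : H₁ →ₗ[ℂ] H₂) = T := by
    rwa [adjoint_adjoint]
  obtain ⟨n₀, h⟩ := eventually_atTop.1 <|
    (eventually_range_add_natCast_smul_eq hS hT A B hA hB hB').and
      (eventually_range_add_natCast_smul_eq hT hS (adjoint A) (adjoint B) hA' hB' hB'')
  refine ⟨n₀, fun n hn ↦ ⟨(h n hn).1, ?_⟩⟩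
  simpa [map_smulₛₗ] using (h n hn).2
end
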